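/- Fix integers M ≥ 1 and r ≥ 1. Let Ω be an open subset of the space of variables (w₀₀, w₁₀, w₀₁, v, p, θ₀, …, θ_M, ζ¹₀, …, ζ¹_{r+1}, ζ²₀, …, ζ²_{r+1}) on which v ≠ 0 and p ≠ 0. Let ϱ be a smooth function on Ω that does not depend on the variables ζ¹_{r+1} and ζ²_{r+1}, and define Tϱ := (w₁₀ + v·w₀₁)·∂ϱ/∂w₀₀ + (ζ²₀ + v·ζ¹₀ − (1/6)v³ + (θ₀ + v·θ₁ − v²/p)·ζ¹₁)·∂ϱ/∂w₁₀ + (ζ¹₀ + ½v²)·∂ϱ/∂w₀₁ + (p²/v)·∂ϱ/∂p + Σ_{i=1,2} Σ_{k=0}^{r} ζ^i_{k+1}·∂ϱ/∂ζ^i_k. Then Tϱ vanishes identically on Ω if and only if all the partial derivatives ∂ϱ/∂w₀₀, ∂ϱ/∂w₁₀, ∂ϱ/∂w₀₁, ∂ϱ/∂p, and ∂ϱ/∂ζ^i_k for i = 1,2 and k = 0,…,r vanish identically on Ω, i.e. if and only if ϱ depends only on v and θ₀, …, θ_M. -/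

import Mathlib

/-!
`T` is the derivation `∂_V` along the vector field `V = Tfield`. Whenever `∂_e ϱ = 0` and
`∂_V ϱ = 0` on `Ω`, also `∂_{[e, V]} ϱ = 0`, and for a coordinate direction `e` along which `V` is
affine the bracket is just `∂_e V`. Since `ϱ` does not depend on `ζ^i_{r+1}`, bracketing with
`∂_{ζ²_{k+1}}` walks down to `∂_{ζ²_0} V = ∂_{w₁₀}`; then bracketing with `∂_{ζ¹_{k+1}}` walks down
to `ζ¹_0` (the extra `∂_{w₁₀}`-term at `k = 0` is already known to vanish), and
`∂_{ζ¹_0} V = v ∂_{w₁₀} + ∂_{w₀₁}`, `∂_{w₀₁} V = v ∂_{w₀₀}` with `v ≠ 0`. What remains of `Tϱ = 0`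
is `(p²/v) ϱ_p = 0`.
-/

/-- The coordinate space
`(w₀₀, w₁₀, w₀₁, v, p, θ₀, …, θ_M, ζ¹₀, …, ζ¹_{r+1}, ζ²₀, …, ζ²_{r+1})`. -/
abbrev Pt8 (M r : ℕ) : Type :=
  ℝ × ℝ × ℝ × ℝ × ℝ × (Fin (M + 1) → ℝ) × (Fin (r + 2) → ℝ) × (Fin (r + 2) → ℝ)

section
variable (M r : ℕ)

/-- Replace the coordinate `w₀₀` by `t`. -/
def upd00 (q : Pt8 M r) (t : ℝ) : Pt8 M r := (t, q.2)

/-- Replace the coordinate `w₁₀` by `t`. -/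
def upd10 (q : Pt8 M r) (t : ℝ) : Pt8 M r := (q.1, t, q.2.2)

/-- Replace the coordinate `w₀₁` by `t`. -/
def upd01 (q : Pt8 M r) (t : ℝ) : Pt8 M r := (q.1, q.2.1, t, q.2.2.2)

/-- Replace the coordinate `v` by `t`. -/
def updV (q : Pt8 M r) (t : ℝ) : Pt8 M r := (q.1, q.2.1, q.2.2.1, t, q.2.2.2.2)

/-- Replace the coordinate `p` by `t`. -/
def updP (q : Pt8 M r) (t : ℝ) : Pt8 M r :=
  (q.1, q.2.1, q.2.2.1, q.2.2.2.1, t, q.2.2.2.2.2)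

/-- Replace the coordinate `ζ¹_j` by `t`. -/
def updZ1 (q : Pt8 M r) (j : Fin (r + 2)) (t : ℝ) : Pt8 M r :=
  (q.1, q.2.1, q.2.2.1, q.2.2.2.1, q.2.2.2.2.1, q.2.2.2.2.2.1,
    Function.update q.2.2.2.2.2.2.1 j t, q.2.2.2.2.2.2.2)

/-- Replace the coordinate `ζ²_j` by `t`. -/
def updZ2 (q : Pt8 M r) (j : Fin (r + 2)) (t : ℝ) : Pt8 M r :=
  (q.1, q.2.1, q.2.2.1, q.2.2.2.1, q.2.2.2.2.1, q.2.2.2.2.2.1,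
    q.2.2.2.2.2.2.1, Function.update q.2.2.2.2.2.2.2 j t)

/-- Partial derivative with respect to `w₀₀`. -/
noncomputable def pd00 (ϱ : Pt8 M r → ℝ) (q : Pt8 M r) : ℝ :=
  deriv (fun t => ϱ (upd00 M r q t)) q.1

/-- Partial derivative with respect to `w₁₀`. -/
noncomputable def pd10 (ϱ : Pt8 M r → ℝ) (q : Pt8 M r) : ℝ :=
  deriv (fun t => ϱ (upd10 M r q t)) q.2.1

/-- Partial derivative with respect to `w₀₁`. -/
noncomputable def pd01 (ϱ : Pt8 M r → ℝ) (q : Pt8 M r) : ℝ :=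
  deriv (fun t => ϱ (upd01 M r q t)) q.2.2.1

/-- Partial derivative with respect to `v`. -/
noncomputable def pdV (ϱ : Pt8 M r → ℝ) (q : Pt8 M r) : ℝ :=
  deriv (fun t => ϱ (updV M r q t)) q.2.2.2.1

/-- Partial derivative with respect to `p`. -/
noncomputable def pdP (ϱ : Pt8 M r → ℝ) (q : Pt8 M r) : ℝ :=
  deriv (fun t => ϱ (updP M r q t)) q.2.2.2.2.1

/-- Partial derivative with respect to `ζ¹_j`. -/
noncomputable def pdZ1 (j : Fin (r + 2)) (ϱ : Pt8 M r → ℝ) (q : Pt8 M r) : ℝ :=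
  deriv (fun t => ϱ (updZ1 M r q j t)) (q.2.2.2.2.2.2.1 j)

/-- Partial derivative with respect to `ζ²_j`. -/
noncomputable def pdZ2 (j : Fin (r + 2)) (ϱ : Pt8 M r → ℝ) (q : Pt8 M r) : ℝ :=
  deriv (fun t => ϱ (updZ2 M r q j t)) (q.2.2.2.2.2.2.2 j)

/-- The operator `T` (the restriction of `D̂₁ + w₂₂·D̂₂` in the modified coordinates):
`Tϱ = (w₁₀ + v w₀₁) ϱ_{w₀₀}
  + (ζ²₀ + v ζ¹₀ − v³/6 + (θ₀ + v θ₁ − v²/p) ζ¹₁) ϱ_{w₁₀}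
  + (ζ¹₀ + v²/2) ϱ_{w₀₁} + (p²/v) ϱ_p + Σ_{i=1,2} Σ_{k=0}^{r} ζ^i_{k+1} ϱ_{ζ^i_k}`. -/
noncomputable def Tvf (ϱ : Pt8 M r → ℝ) (q : Pt8 M r) : ℝ :=
  (q.2.1 + q.2.2.2.1 * q.2.2.1) * pd00 M r ϱ q
    + (q.2.2.2.2.2.2.2 0 + q.2.2.2.1 * q.2.2.2.2.2.2.1 0
        - (1 / 6) * q.2.2.2.1 ^ 3
        + (q.2.2.2.2.2.1 0 + q.2.2.2.1 * q.2.2.2.2.2.1 1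
            - q.2.2.2.1 ^ 2 / q.2.2.2.2.1) * q.2.2.2.2.2.2.1 1) * pd10 M r ϱ q
    + (q.2.2.2.2.2.2.1 0 + (1 / 2) * q.2.2.2.1 ^ 2) * pd01 M r ϱ q
    + (q.2.2.2.2.1 ^ 2 / q.2.2.2.1) * pdP M r ϱ q
    + ∑ k : Fin (r + 1),
        (q.2.2.2.2.2.2.1 k.succ * pdZ1 M r k.castSucc ϱ q
          + q.2.2.2.2.2.2.2 k.succ * pdZ2 M r k.castSucc ϱ q)

end

open Filter Topology

theorem Function.update_eq_add_single_sub {ι G : Type*} [DecidableEq ι] [AddCommGroup G]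
    (f : ι → G) (j : ι) (t : G) : Function.update f j t = f + Pi.single j (t - f j) := by
  ext k
  rcases eq_or_ne k j with rfl | hk <;> simp [*]

section Bracket

variable {E F : Type*} [NormedAddCommGroup E] [NormedSpace ℝ E]
  [NormedAddCommGroup F] [NormedSpace ℝ F]

theorem hasDerivAt_comp_add_sub_smul {f : E → F} {q : E} (hf : DifferentiableAt ℝ f q)
    (e : E) (c : ℝ) : HasDerivAt (fun t => f (q + (t - c) • e)) (fderiv ℝ f q e) c := by
  have hline : HasDerivAt (fun t : ℝ => q + (t - c) • e) e c := by
    simpa using (((hasDerivAt_id c).sub_const c).smul_const e).const_add q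
  simpa [Function.comp_def] using (by simpa using hf.hasFDerivAt :
    HasFDerivAt f (fderiv ℝ f q) (q + (c - c) • e)).comp_hasDerivAt c hline

/-- If `∂_e` and `∂_V` annihilate `f` on `Ω`, so does their bracket `∂_{∂_e V}`: the
second-order terms cancel by symmetry of `D²f`. -/
theorem fderiv_apply_eq_zero_of_bracket {f : E → F} {Ω : Set E} (hΩ : IsOpen Ω)
    (hf : ContDiffOn ℝ 2 f Ω) {V : E → E} {e w x : E} (hx : x ∈ Ω)
    (hV : ∀ y ∈ Ω, fderiv ℝ f y (V y) = 0) (he : ∀ y ∈ Ω, fderiv ℝ f y e = 0)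
    (hVe : HasDerivAt (fun t : ℝ => V (x + t • e)) w 0) :
    fderiv ℝ f x w = 0 := by
  have hΩx : Ω ∈ 𝓝 x := hΩ.mem_nhds hx
  have hf' : DifferentiableAt ℝ (fderiv ℝ f) x :=
    ((hf.fderiv_of_isOpen (m := 1) hΩ (by norm_num)).differentiableOn one_ne_zero).differentiableAt
      hΩx
  have hzero : fderiv ℝ (fderiv ℝ f) x e (V x) = 0 := by
    have hsymm := (hf.contDiffAt hΩx).isSymmSndFDerivAt (by simp)
    have hclm := hf'.hasFDerivAt.clm_apply (hasFDerivAt_const e x)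
    have hconst : HasFDerivAt (fun y => fderiv ℝ f y e) (0 : E →L[ℝ] F) x :=
      (hasFDerivAt_const 0 x).congr_of_eventuallyEq <| by
        filter_upwards [hΩx] with y hy using he y hy
    simpa [hsymm e] using congrArg (· (V x)) (hclm.unique hconst)
  have hc := hasDerivAt_comp_add_sub_smul hf' e 0
  simp only [sub_zero] at hc
  have hderiv := hc.clm_apply hVe
  simp only [zero_smul, add_zero, hzero, zero_add] at hderiv
  refine hderiv.unique ((hasDerivAt_const (0 : ℝ) (0 : F)).congr_of_eventuallyEq ?_)
  have hline : ∀ᶠ t in 𝓝 (0 : ℝ), x + t • e ∈ Ω :=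
    (by fun_prop : Continuous fun t : ℝ => x + t • e).continuousAt.preimage_mem_nhds
      (by simpa using hΩx)
  filter_upwards [hline] with t ht using hV _ ht

end Bracket

namespace Pt8

variable {M r : ℕ}

def basis00 : Pt8 M r := upd00 M r 0 1
def basis10 : Pt8 M r := upd10 M r 0 1
def basis01 : Pt8 M r := upd01 M r 0 1
def basisP : Pt8 M r := updP M r 0 1
def basisZ1 (j : Fin (r + 2)) : Pt8 M r := updZ1 M r 0 j 1
def basisZ2 (j : Fin (r + 2)) : Pt8 M r := updZ2 M r 0 j 1

noncomputable def Tfield (q : Pt8 M r) : Pt8 M r :=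
  (q.2.1 + q.2.2.2.1 * q.2.2.1) • basis00
    + (q.2.2.2.2.2.2.2 0 + q.2.2.2.1 * q.2.2.2.2.2.2.1 0
        - (1 / 6) * q.2.2.2.1 ^ 3
        + (q.2.2.2.2.2.1 0 + q.2.2.2.1 * q.2.2.2.2.2.1 1
            - q.2.2.2.1 ^ 2 / q.2.2.2.2.1) * q.2.2.2.2.2.2.1 1) • basis10
    + (q.2.2.2.2.2.2.1 0 + (1 / 2) * q.2.2.2.1 ^ 2) • basis01
    + (q.2.2.2.2.1 ^ 2 / q.2.2.2.1) • basisP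
    + ∑ k : Fin (r + 1),
        (q.2.2.2.2.2.2.1 k.succ • basisZ1 k.castSucc + q.2.2.2.2.2.2.2 k.succ • basisZ2 k.castSucc)

theorem add_smul_basis01 (x : Pt8 M r) (t : ℝ) :
    x + t • basis01 = (x.1, x.2.1, x.2.2.1 + t, x.2.2.2) := by
  ext <;> simp [basis01, upd01]

theorem add_smul_basisZ1 (x : Pt8 M r) (j : Fin (r + 2)) (t : ℝ) :
    x + t • basisZ1 j = (x.1, x.2.1, x.2.2.1, x.2.2.2.1, x.2.2.2.2.1, x.2.2.2.2.2.1,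
      x.2.2.2.2.2.2.1 + Pi.single j t, x.2.2.2.2.2.2.2) := by
  ext <;> simp [basisZ1, updZ1, Function.update_apply, Pi.single_apply]

theorem add_smul_basisZ2 (x : Pt8 M r) (j : Fin (r + 2)) (t : ℝ) :
    x + t • basisZ2 j = (x.1, x.2.1, x.2.2.1, x.2.2.2.1, x.2.2.2.2.1, x.2.2.2.2.2.1,
      x.2.2.2.2.2.2.1, x.2.2.2.2.2.2.2 + Pi.single j t) := by
  ext <;> simp [basisZ2, updZ2, Function.update_apply, Pi.single_apply]

section PartialDerivatives

variable {ϱ : Pt8 M r → ℝ} {q : Pt8 M r}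

theorem pd00_eq_fderiv (hϱ : DifferentiableAt ℝ ϱ q) : pd00 M r ϱ q = fderiv ℝ ϱ q basis00 := by
  have hline (t : ℝ) : upd00 M r q t = q + (t - q.1) • basis00 := by ext <;> simp [upd00, basis00]
  simpa only [pd00, hline] using (hasDerivAt_comp_add_sub_smul hϱ _ _).deriv

theorem pd10_eq_fderiv (hϱ : DifferentiableAt ℝ ϱ q) : pd10 M r ϱ q = fderiv ℝ ϱ q basis10 := by
  have hline (t : ℝ) : upd10 M r q t = q + (t - q.2.1) • basis10 := by
    ext <;> simp [upd10, basis10]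
  simpa only [pd10, hline] using (hasDerivAt_comp_add_sub_smul hϱ _ _).deriv

theorem pd01_eq_fderiv (hϱ : DifferentiableAt ℝ ϱ q) : pd01 M r ϱ q = fderiv ℝ ϱ q basis01 := by
  have hline (t : ℝ) : upd01 M r q t = q + (t - q.2.2.1) • basis01 := by
    ext <;> simp [upd01, basis01]
  simpa only [pd01, hline] using (hasDerivAt_comp_add_sub_smul hϱ _ _).deriv

theorem pdP_eq_fderiv (hϱ : DifferentiableAt ℝ ϱ q) : pdP M r ϱ q = fderiv ℝ ϱ q basisP := by
  have hline (t : ℝ) : updP M r q t = q + (t - q.2.2.2.2.1) • basisP := by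
    ext <;> simp [updP, basisP]
  simpa only [pdP, hline] using (hasDerivAt_comp_add_sub_smul hϱ _ _).deriv

theorem pdZ1_eq_fderiv (hϱ : DifferentiableAt ℝ ϱ q) (j : Fin (r + 2)) :
    pdZ1 M r j ϱ q = fderiv ℝ ϱ q (basisZ1 j) := by
  have hline (t : ℝ) : updZ1 M r q j t = q + (t - q.2.2.2.2.2.2.1 j) • basisZ1 j := by
    rw [add_smul_basisZ1, updZ1, Function.update_eq_add_single_sub]
  simpa only [pdZ1, hline] using (hasDerivAt_comp_add_sub_smul hϱ _ _).deriv

theorem pdZ2_eq_fderiv (hϱ : DifferentiableAt ℝ ϱ q) (j : Fin (r + 2)) :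
    pdZ2 M r j ϱ q = fderiv ℝ ϱ q (basisZ2 j) := by
  have hline (t : ℝ) : updZ2 M r q j t = q + (t - q.2.2.2.2.2.2.2 j) • basisZ2 j := by
    rw [add_smul_basisZ2, updZ2, Function.update_eq_add_single_sub]
  simpa only [pdZ2, hline] using (hasDerivAt_comp_add_sub_smul hϱ _ _).deriv

theorem Tvf_eq_fderiv_Tfield (hϱ : DifferentiableAt ℝ ϱ q) :
    Tvf M r ϱ q = fderiv ℝ ϱ q (Tfield q) := by
  simp only [Tvf, Tfield, map_add, map_smul, map_sum, smul_eq_mul, pd00_eq_fderiv hϱ,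
    pd10_eq_fderiv hϱ, pd01_eq_fderiv hϱ, pdP_eq_fderiv hϱ, pdZ1_eq_fderiv hϱ, pdZ2_eq_fderiv hϱ]

end PartialDerivatives

section Affine

theorem Tfield_add_smul_basisZ2_succ (j : Fin (r + 1)) (x : Pt8 M r) (t : ℝ) :
    Tfield (x + t • basisZ2 j.succ) = Tfield x + t • basisZ2 j.castSucc := by
  rw [add_smul_basisZ2]
  simp only [Tfield, add_smul, Pi.add_apply, ne_eq, Fin.succ_ne_zero, not_false_eq_true,
    Pi.single_eq_of_ne', add_zero, one_div, Pi.single_apply, Fin.succ_inj, ite_smul, zero_smul,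
    Finset.sum_add_distrib, Finset.sum_ite_eq', Finset.mem_univ, ↓reduceIte]
  abel

theorem Tfield_add_smul_basisZ2_zero (x : Pt8 M r) (t : ℝ) :
    Tfield (x + t • basisZ2 0) = Tfield x + t • basis10 := by
  rw [add_smul_basisZ2]
  simp only [Tfield, add_smul, Pi.add_apply, Pi.single_eq_same, one_div, ne_eq, Fin.succ_ne_zero,
    not_false_eq_true, Pi.single_eq_of_ne, add_zero, Finset.sum_add_distrib]
  module

theorem Tfield_add_smul_basisZ1_succ_succ (j : Fin r) (x : Pt8 M r) (t : ℝ) :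
    Tfield (x + t • basisZ1 j.succ.succ) = Tfield x + t • basisZ1 j.succ.castSucc := by
  have hne_one : (1 : Fin (r + 2)) ≠ j.succ.succ := by simp [Fin.ext_iff]
  rw [add_smul_basisZ1]
  simp only [Tfield, add_smul, Pi.add_apply, ne_eq, Fin.succ_ne_zero, not_false_eq_true,
    Pi.single_eq_of_ne', add_zero, one_div, hne_one, Pi.single_eq_of_ne, Pi.single_apply,
    Fin.succ_inj, ite_smul, zero_smul, Finset.sum_add_distrib, Finset.sum_ite_eq',
    Finset.mem_univ, ↓reduceIte, Fin.castSucc_succ]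
  abel

theorem Tfield_add_smul_basisZ1_one (x : Pt8 M r) (t : ℝ) :
    Tfield (x + t • basisZ1 1) = Tfield x + t • ((x.2.2.2.2.2.1 0 + x.2.2.2.1 * x.2.2.2.2.2.1 1
      - x.2.2.2.1 ^ 2 / x.2.2.2.2.1) • basis10 + basisZ1 0) := by
  have hsucc_eq_one (k : Fin (r + 1)) : k.succ = 1 ↔ k = 0 := by
    rw [← Fin.succ_zero_eq_one, Fin.succ_inj]
  rw [add_smul_basisZ1]
  simp only [Tfield, add_smul, Pi.add_apply, ne_eq, zero_ne_one, not_false_eq_true,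
    Pi.single_eq_of_ne, add_zero, one_div, Pi.single_eq_same, Pi.single_apply, hsucc_eq_one,
    ite_smul, zero_smul, Finset.sum_add_distrib, Finset.sum_ite_eq', Finset.mem_univ,
    ↓reduceIte, Fin.castSucc_zero, smul_add]
  module

theorem Tfield_add_smul_basisZ1_zero (x : Pt8 M r) (t : ℝ) :
    Tfield (x + t • basisZ1 0) = Tfield x + t • (x.2.2.2.1 • basis10 + basis01) := by
  rw [add_smul_basisZ1]
  simp only [Tfield, add_smul, Pi.add_apply, Pi.single_eq_same, one_div, ne_eq, one_ne_zero,
    not_false_eq_true, Pi.single_eq_of_ne, add_zero, Fin.succ_ne_zero, Finset.sum_add_distrib,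
    smul_add]
  module

theorem Tfield_add_smul_basis01 (x : Pt8 M r) (t : ℝ) :
    Tfield (x + t • basis01) = Tfield x + t • (x.2.2.2.1 • basis00) := by
  rw [add_smul_basis01]
  simp only [Tfield]
  module

end Affine

section Annihilator

variable {Ω : Set (Pt8 M r)} {ϱ : Pt8 M r → ℝ}

theorem fderiv_eq_zero_of_Tfield_add_smul (hΩ : IsOpen Ω) (hϱ : ContDiffOn ℝ 2 ϱ Ω)
    (hT : ∀ x ∈ Ω, fderiv ℝ ϱ x (Tfield x) = 0) {e : Pt8 M r}
    (he : ∀ x ∈ Ω, fderiv ℝ ϱ x e = 0) {w : Pt8 M r → Pt8 M r}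
    (hw : ∀ x (t : ℝ), Tfield (x + t • e) = Tfield x + t • w x) :
    ∀ x ∈ Ω, fderiv ℝ ϱ x (w x) = 0 := fun x hx =>
  fderiv_apply_eq_zero_of_bracket hΩ hϱ hx hT he <| by
    simpa [hw] using ((hasDerivAt_id (0 : ℝ)).smul_const (w x)).const_add (Tfield x)

theorem fderiv_basisZ2_eq_zero (hΩ : IsOpen Ω) (hϱ : ContDiffOn ℝ 2 ϱ Ω)
    (hT : ∀ x ∈ Ω, fderiv ℝ ϱ x (Tfield x) = 0)
    (hlast : ∀ x ∈ Ω, fderiv ℝ ϱ x (basisZ2 (Fin.last (r + 1))) = 0) (j : Fin (r + 2)) :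
    ∀ x ∈ Ω, fderiv ℝ ϱ x (basisZ2 j) = 0 := by
  induction j using Fin.reverseInduction with
  | last => exact hlast
  | cast j ih =>
    exact fderiv_eq_zero_of_Tfield_add_smul hΩ hϱ hT ih (Tfield_add_smul_basisZ2_succ j)

theorem fderiv_basisZ1_eq_zero (hΩ : IsOpen Ω) (hϱ : ContDiffOn ℝ 2 ϱ Ω)
    (hT : ∀ x ∈ Ω, fderiv ℝ ϱ x (Tfield x) = 0) (h10 : ∀ x ∈ Ω, fderiv ℝ ϱ x basis10 = 0)
    (hlast : ∀ x ∈ Ω, fderiv ℝ ϱ x (basisZ1 (Fin.last (r + 1))) = 0) (j : Fin (r + 2)) :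
    ∀ x ∈ Ω, fderiv ℝ ϱ x (basisZ1 j) = 0 := by
  induction j using Fin.reverseInduction with
  | last => exact hlast
  | cast j ih =>
    cases j using Fin.cases with
    | zero =>
      intro x hx
      simpa [h10 x hx] using
        fderiv_eq_zero_of_Tfield_add_smul hΩ hϱ hT ih Tfield_add_smul_basisZ1_one x hx
    | succ j =>
      exact fderiv_eq_zero_of_Tfield_add_smul hΩ hϱ hT ih (Tfield_add_smul_basisZ1_succ_succ j)

theorem fderiv_basis_eq_zero (hΩ : IsOpen Ω) (hϱ : ContDiffOn ℝ 2 ϱ Ω)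
    (hΩv : ∀ x ∈ Ω, x.2.2.2.1 ≠ 0) (hΩp : ∀ x ∈ Ω, x.2.2.2.2.1 ≠ 0)
    (hT : ∀ x ∈ Ω, fderiv ℝ ϱ x (Tfield x) = 0)
    (hZ1last : ∀ x ∈ Ω, fderiv ℝ ϱ x (basisZ1 (Fin.last (r + 1))) = 0)
    (hZ2last : ∀ x ∈ Ω, fderiv ℝ ϱ x (basisZ2 (Fin.last (r + 1))) = 0) {x : Pt8 M r}
    (hx : x ∈ Ω) :
    fderiv ℝ ϱ x basis00 = 0 ∧ fderiv ℝ ϱ x basis10 = 0 ∧ fderiv ℝ ϱ x basis01 = 0 ∧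
      fderiv ℝ ϱ x basisP = 0 ∧
      ∀ j, fderiv ℝ ϱ x (basisZ1 j) = 0 ∧ fderiv ℝ ϱ x (basisZ2 j) = 0 := by
  have hZ2 := fderiv_basisZ2_eq_zero hΩ hϱ hT hZ2last
  have h10 := fderiv_eq_zero_of_Tfield_add_smul hΩ hϱ hT (hZ2 0) Tfield_add_smul_basisZ2_zero
  have hZ1 := fderiv_basisZ1_eq_zero hΩ hϱ hT h10 hZ1last
  have h01 (y) (hy : y ∈ Ω) : fderiv ℝ ϱ y basis01 = 0 := by
    simpa [h10 y hy] using
      fderiv_eq_zero_of_Tfield_add_smul hΩ hϱ hT (hZ1 0) Tfield_add_smul_basisZ1_zero y hy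
  have h00 (y) (hy : y ∈ Ω) : fderiv ℝ ϱ y basis00 = 0 := by
    simpa [hΩv y hy] using
      fderiv_eq_zero_of_Tfield_add_smul hΩ hϱ hT h01 Tfield_add_smul_basis01 y hy
  have hP : fderiv ℝ ϱ x basisP = 0 := by
    simpa [Tfield, h00 x hx, h10 x hx, h01 x hx, hZ1 _ x hx, hZ2 _ x hx, hΩv x hx, hΩp x hx]
      using hT x hx
  exact ⟨h00 x hx, h10 x hx, h01 x hx, hP, fun j => ⟨hZ1 j x hx, hZ2 j x hx⟩⟩

end Annihilator

end Pt8

open Pt8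

theorem statement8_general (M r : ℕ)
    (Ω : Set (Pt8 M r)) (hΩ : IsOpen Ω)
    (hΩv : ∀ q ∈ Ω, q.2.2.2.1 ≠ 0) (hΩp : ∀ q ∈ Ω, q.2.2.2.2.1 ≠ 0)
    (ϱ : Pt8 M r → ℝ) (hϱ : ContDiffOn ℝ (⊤ : ℕ∞) ϱ Ω)
    (hind1 : ∀ (q : Pt8 M r) (t : ℝ), ϱ (updZ1 M r q (Fin.last (r + 1)) t) = ϱ q)
    (hind2 : ∀ (q : Pt8 M r) (t : ℝ), ϱ (updZ2 M r q (Fin.last (r + 1)) t) = ϱ q) :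
    (∀ q ∈ Ω, Tvf M r ϱ q = 0) ↔
      ∀ q ∈ Ω, pd00 M r ϱ q = 0 ∧ pd10 M r ϱ q = 0 ∧ pd01 M r ϱ q = 0 ∧
        pdP M r ϱ q = 0 ∧
        ∀ k : Fin (r + 1), pdZ1 M r k.castSucc ϱ q = 0 ∧ pdZ2 M r k.castSucc ϱ q = 0 := by
  have hϱ2 : ContDiffOn ℝ 2 ϱ Ω := hϱ.of_le (WithTop.coe_le_coe.2 le_top)
  have hdiff (x) (hx : x ∈ Ω) : DifferentiableAt ℝ ϱ x :=
    (hϱ2.differentiableOn two_ne_zero).differentiableAt (hΩ.mem_nhds hx)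
  refine ⟨fun hTvf q hq => ?_, fun h q hq => ?_⟩
  · have hT (x) (hx : x ∈ Ω) : fderiv ℝ ϱ x (Tfield x) = 0 := by
      rw [← Tvf_eq_fderiv_Tfield (hdiff x hx), hTvf x hx]
    have hZ1last (x) (hx : x ∈ Ω) : fderiv ℝ ϱ x (basisZ1 (Fin.last (r + 1))) = 0 := by
      rw [← pdZ1_eq_fderiv (hdiff x hx), pdZ1]; simp [hind1]
    have hZ2last (x) (hx : x ∈ Ω) : fderiv ℝ ϱ x (basisZ2 (Fin.last (r + 1))) = 0 := by
      rw [← pdZ2_eq_fderiv (hdiff x hx), pdZ2]; simp [hind2]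
    obtain ⟨h00, h10, h01, hP, hZ⟩ := fderiv_basis_eq_zero hΩ hϱ2 hΩv hΩp hT hZ1last hZ2last hq
    simp only [pd00_eq_fderiv (hdiff q hq), pd10_eq_fderiv (hdiff q hq),
      pd01_eq_fderiv (hdiff q hq), pdP_eq_fderiv (hdiff q hq), pdZ1_eq_fderiv (hdiff q hq),
      pdZ2_eq_fderiv (hdiff q hq)]
    exact ⟨h00, h10, h01, hP, fun k => hZ _⟩
  · obtain ⟨h00, h10, h01, hP, hZ⟩ := h q hq
    simp [Tvf, h00, h10, h01, hP, hZ]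

/-- (Auxiliary lemma on solutions of `(D̂₁ + w₂₂·D̂₂)ϱ = 0`, coordinate
form.)  For `M ≥ 1`, `r ≥ 1` and a smooth function `ϱ` on `Ω ⊆ {v ≠ 0, p ≠ 0}` not
depending on `ζ¹_{r+1}` and `ζ²_{r+1}`, one has `Tϱ = 0` on `Ω` iff the partial
derivatives of `ϱ` with respect to `w₀₀`, `w₁₀`, `w₀₁`, `p` and all `ζ¹_k`, `ζ²_k`
(`k = 0, …, r`) vanish identically on `Ω`, i.e. iff `ϱ` depends only on `v, θ₀, …, θ_M`. -/
theorem statement8 (M r : ℕ) (hM : 1 ≤ M) (hr : 1 ≤ r)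
    (Ω : Set (Pt8 M r)) (hΩ : IsOpen Ω)
    (hΩv : ∀ q ∈ Ω, q.2.2.2.1 ≠ 0) (hΩp : ∀ q ∈ Ω, q.2.2.2.2.1 ≠ 0)
    (ϱ : Pt8 M r → ℝ) (hϱ : ContDiffOn ℝ (⊤ : ℕ∞) ϱ Ω)
    (hind1 : ∀ (q : Pt8 M r) (t : ℝ), ϱ (updZ1 M r q (Fin.last (r + 1)) t) = ϱ q)
    (hind2 : ∀ (q : Pt8 M r) (t : ℝ), ϱ (updZ2 M r q (Fin.last (r + 1)) t) = ϱ q) :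
    (∀ q ∈ Ω, Tvf M r ϱ q = 0) ↔
      ∀ q ∈ Ω, pd00 M r ϱ q = 0 ∧ pd10 M r ϱ q = 0 ∧ pd01 M r ϱ q = 0 ∧
        pdP M r ϱ q = 0 ∧
        ∀ k : Fin (r + 1), pdZ1 M r k.castSucc ϱ q = 0 ∧ pdZ2 M r k.castSucc ϱ q = 0 :=
  statement8_general M r Ω hΩ hΩv hΩp ϱ hϱ hind1 hind2
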